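/- arXiv:2304.07067 — 9 statements merged into one kernel-verified Lean document; each statement's English description precedes it below -/
import Mathlib

section
/- Let ‖·‖ be a monotone norm on ℝ^K, let p̄ > 0, let C := {p ∈ ℝ_{≥0}^K : ‖p‖ ≤ p̄}, and let utility functions u_1,…,u_K satisfy Assumption 1. Let p* ∈ C satisfy u_k(p*) > 0 for every k ∈ {1,…,K}. If the utilities (u_1(p*),…,u_K(p*)) are on the weak Pareto boundary under the constraint C, then p* is an optimal solution (a maximizer) of the problem: maximize min_{k∈{1,…,K}} ω_k^{−1} u_k(p) over p ∈ ℝ_{≥0}^K subject to ‖p‖ ≤ p̄, with the weights chosen as ω_k = u_k(p*) for every k. -/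
open Filter Topology MeasureTheory

/-- The nonnegative orthant of `ℝ^K`. -/
def NonnegOrth (K : ℕ) : Set (Fin K → ℝ) := {x | ∀ i, 0 ≤ x i}

/-- A standard interference function: positive, monotone and scalable on the
nonnegative orthant. -/
def StdIF {K : ℕ} (f : (Fin K → ℝ) → ℝ) : Prop :=
  (∀ x ∈ NonnegOrth K, 0 < f x) ∧
  (∀ x ∈ NonnegOrth K, ∀ y ∈ NonnegOrth K, (∀ i, y i ≤ x i) → f y ≤ f x) ∧
  (∀ x ∈ NonnegOrth K, ∀ α : ℝ, 1 < α → f (α • x) < α * f x)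

/-- Assumption 1: each utility `u k` equals `p k / f k p` on the nonnegative orthant,
for a continuous standard interference function `f k`. -/
def Assumption1 {K : ℕ} (u f : Fin K → (Fin K → ℝ) → ℝ) : Prop :=
  ∀ k, StdIF (f k) ∧ ContinuousOn (f k) (NonnegOrth K) ∧
    ∀ p ∈ NonnegOrth K, u k p = p k / f k p

/-- A monotone norm on `ℝ^K`. -/
def IsMonoNorm {K : ℕ} (N : (Fin K → ℝ) → ℝ) : Prop :=
  (∀ x, 0 ≤ N x) ∧ (∀ x, N x = 0 ↔ x = 0) ∧
  (∀ (a : ℝ) (x : Fin K → ℝ), N (a • x) = |a| * N x) ∧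
  (∀ x y, N (x + y) ≤ N x + N y) ∧
  (∀ x y : Fin K → ℝ, x ∈ NonnegOrth K → (∀ i, x i ≤ y i) → N x ≤ N y)

/-- The utilities of `p` are on the weak Pareto boundary under the constraint `C`. -/
def WeakPareto {K : ℕ} (u : Fin K → (Fin K → ℝ) → ℝ)
    (C : Set (Fin K → ℝ)) (p : Fin K → ℝ) : Prop :=
  ¬ ∃ p' ∈ C, ∀ k, u k p < u k p'

/-- Feasibility for the weighted max-min problem (1). -/
def Feas1 {K : ℕ} (N : (Fin K → ℝ) → ℝ) (pbar : ℝ) (p : Fin K → ℝ) : Prop :=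
  p ∈ NonnegOrth K ∧ N p ≤ pbar

/-- Optimality for the weighted max-min problem (1):
maximize `min_k (ω k)⁻¹ * u k p` subject to `‖p‖ ≤ pbar`. -/
def Sol1 {K : ℕ} (N : (Fin K → ℝ) → ℝ) (pbar : ℝ) (ω : Fin K → ℝ)
    (u : Fin K → (Fin K → ℝ) → ℝ) (p : Fin K → ℝ) : Prop :=
  Feas1 N pbar p ∧ ∀ q, Feas1 N pbar q →
    (⨅ k, (ω k)⁻¹ * u k q) ≤ ⨅ k, (ω k)⁻¹ * u k p

/-- Feasibility for the epigraph-form problem (2). -/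
def Feas2 {K : ℕ} (N : (Fin K → ℝ) → ℝ) (pbar : ℝ) (ω : Fin K → ℝ)
    (u : Fin K → (Fin K → ℝ) → ℝ) (c : ℝ) (p : Fin K → ℝ) : Prop :=
  0 ≤ c ∧ p ∈ NonnegOrth K ∧ N p ≤ pbar ∧ ∀ k, c * ω k ≤ u k p

/-- Optimality for the epigraph-form problem (2): maximize `c` subject to
`‖p‖ ≤ pbar` and `u k p ≥ c * ω k` for all `k`. -/
def Sol2 {K : ℕ} (N : (Fin K → ℝ) → ℝ) (pbar : ℝ) (ω : Fin K → ℝ)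
    (u : Fin K → (Fin K → ℝ) → ℝ) (c : ℝ) (p : Fin K → ℝ) : Prop :=
  Feas2 N pbar ω u c p ∧ ∀ c' p', Feas2 N pbar ω u c' p' → c' ≤ c

/-- Feasibility for the fixed-point-form problem (4). -/
def Feas4 {K : ℕ} (N : (Fin K → ℝ) → ℝ) (pbar : ℝ)
    (T : (Fin K → ℝ) → Fin K → ℝ) (c : ℝ) (p : Fin K → ℝ) : Prop :=
  0 ≤ c ∧ p ∈ NonnegOrth K ∧ N p ≤ pbar ∧ p = c • T p

/-- Optimality for the fixed-point-form problem (4): maximize `c` subject to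
`‖p‖ ≤ pbar` and `p = c • T p`. -/
def Sol4 {K : ℕ} (N : (Fin K → ℝ) → ℝ) (pbar : ℝ)
    (T : (Fin K → ℝ) → Fin K → ℝ) (c : ℝ) (p : Fin K → ℝ) : Prop :=
  Feas4 N pbar T c p ∧ ∀ c' p', Feas4 N pbar T c' p' → c' ≤ c

/-- Proposition 1: if the utilities of `pstar` (all positive) are on the weak
Pareto boundary under `C = {p ≥ 0 : ‖p‖ ≤ pbar}`, then `pstar` solves the
weighted max-min problem with weights `ω k = u k pstar`. -/
theorem stmt3 {K : ℕ} (hK : 0 < K) (N : (Fin K → ℝ) → ℝ) (hN : IsMonoNorm N)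
    (pbar : ℝ) (hpbar : 0 < pbar)
    (u f : Fin K → (Fin K → ℝ) → ℝ) (hA : Assumption1 u f)
    (pstar : Fin K → ℝ) (hpstar : pstar ∈ NonnegOrth K) (hfeas : N pstar ≤ pbar)
    (hupos : ∀ k, 0 < u k pstar)
    (hWP : WeakPareto u {p | p ∈ NonnegOrth K ∧ N p ≤ pbar} pstar) :
    Sol1 N pbar (fun k => u k pstar) u pstar := by
  have hne : Nonempty (Fin K) := ⟨⟨0, hK⟩⟩
  refine ⟨⟨hpstar, hfeas⟩, fun q hq => ?_⟩
  have hrhs : (⨅ k, (u k pstar)⁻¹ * u k pstar) = 1 := by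
    have : ∀ k : Fin K, (u k pstar)⁻¹ * u k pstar = 1 := fun k =>
      inv_mul_cancel₀ (hupos k).ne'
    simp only [this, ciInf_const]
  rw [hrhs]
  by_contra h
  push_neg at h
  apply hWP
  refine ⟨q, ⟨hq.1, hq.2⟩, fun k => ?_⟩
  have hle : (⨅ k, (u k pstar)⁻¹ * u k q) ≤ (u k pstar)⁻¹ * u k q :=
    ciInf_le (Finite.bddBelow_range _) k
  have h1 : 1 < (u k pstar)⁻¹ * u k q := lt_of_lt_of_le h hle
  have hp := hupos k
  rw [← div_eq_inv_mul] at h1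
  exact (one_lt_div hp).mp h1
end

section
/- Let ‖·‖ be a monotone norm on ℝ^K, p̄ > 0, weights ω ∈ ℝ_{>0}^K, and utility functions u_1,…,u_K satisfying Assumption 1. Consider Problem (1): maximize min_k ω_k^{−1} u_k(p) over p ∈ ℝ_{≥0}^K subject to ‖p‖ ≤ p̄; and Problem (2): maximize c over (c,p) ∈ ℝ_{≥0} × ℝ_{≥0}^K subject to ‖p‖ ≤ p̄ and u_k(p) ≥ c·ω_k for all k. Then: (a) if (c*, p*) solves Problem (2), then p* solves Problem (1); (b) if p* solves Problem (1), then (c*, p*) with c* := min_k ω_k^{−1} u_k(p*) solves Problem (2); (c) in either case c* > 0, u_k(p*) > 0 for every k, and p* ∈ ℝ_{>0}^K. -/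
open Filter Topology MeasureTheory

/-- Remark 1 (equivalence of problems (1) and (2)): (a) a solution of (2) yields a
solution of (1); (b) a solution of (1) yields a solution of (2) with
`c* = min_k (ω k)⁻¹ u k p*`; (c) in either case the optimal value is positive, all
utilities at the optimum are positive, and the optimal vector is strictly positive. -/
theorem stmt4 {K : ℕ} (hK : 0 < K) (N : (Fin K → ℝ) → ℝ) (hN : IsMonoNorm N)
    (pbar : ℝ) (hpbar : 0 < pbar)
    (ω : Fin K → ℝ) (hω : ∀ k, 0 < ω k)
    (u f : Fin K → (Fin K → ℝ) → ℝ) (hA : Assumption1 u f) :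
    (∀ cstar pstar, Sol2 N pbar ω u cstar pstar → Sol1 N pbar ω u pstar) ∧
    (∀ pstar, Sol1 N pbar ω u pstar →
      Sol2 N pbar ω u (⨅ k, (ω k)⁻¹ * u k pstar) pstar) ∧
    (∀ cstar pstar, Sol2 N pbar ω u cstar pstar →
      0 < cstar ∧ (∀ k, 0 < u k pstar) ∧ ∀ i, 0 < pstar i) ∧
    (∀ pstar, Sol1 N pbar ω u pstar →
      0 < (⨅ k, (ω k)⁻¹ * u k pstar) ∧ (∀ k, 0 < u k pstar) ∧ ∀ i, 0 < pstar i) := by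
  haveI : Nonempty (Fin K) := ⟨⟨0, hK⟩⟩
  obtain ⟨hN0, hNeq, hNsmul, hNadd, hNmono⟩ := hN
  have hbdd : ∀ q : Fin K → ℝ, BddBelow (Set.range fun k => (ω k)⁻¹ * u k q) :=
    fun q => (Set.finite_range _).bddBelow
  have hupos : ∀ p ∈ NonnegOrth K, ∀ k, 0 ≤ u k p := by
    intro p hp k
    rw [(hA k).2.2 p hp]
    exact div_nonneg (hp k) (le_of_lt ((hA k).1.1 p hp))
  -- strictly positive feasible point
  have hone_ne : (fun _ : Fin K => (1:ℝ)) ≠ 0 := by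
    intro h
    have := congrFun h ⟨0, hK⟩
    norm_num at this
  have hNone : 0 < N (fun _ => 1) :=
    lt_of_le_of_ne (hN0 _) (fun h => hone_ne ((hNeq _).mp h.symm))
  set t : ℝ := pbar / N (fun _ => 1) with ht_def
  have ht : 0 < t := div_pos hpbar hNone
  set q0 : Fin K → ℝ := fun _ => t with hq0_def
  have hq0O : q0 ∈ NonnegOrth K := fun i => ht.le
  have hq0N : N q0 ≤ pbar := by
    have h1 : q0 = t • (fun _ => (1:ℝ)) := by funext i; simp [hq0_def]
    rw [h1, hNsmul, abs_of_pos ht, ht_def, div_mul_cancel₀ _ hNone.ne']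
  have hq0F : Feas1 N pbar q0 := ⟨hq0O, hq0N⟩
  have hq0u : ∀ k, 0 < u k q0 := by
    intro k
    rw [(hA k).2.2 q0 hq0O]
    exact div_pos ht ((hA k).1.1 q0 hq0O)
  have hc0 : 0 < ⨅ k, (ω k)⁻¹ * u k q0 := by
    obtain ⟨k, hk⟩ := exists_eq_ciInf_of_finite (f := fun k => (ω k)⁻¹ * u k q0)
    rw [← hk]
    exact mul_pos (inv_pos.mpr (hω k)) (hq0u k)
  -- key1: Feas2 implies c' ≤ inf
  have key1 : ∀ c' p', Feas2 N pbar ω u c' p' → c' ≤ ⨅ k, (ω k)⁻¹ * u k p' := by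
    intro c' p' ⟨hc', hpO, hpN, hcu⟩
    refine le_ciInf fun k => ?_
    rw [le_inv_mul_iff₀ (hω k), mul_comm]
    exact hcu k
  -- key2: Feas1 implies (inf, p) Feas2
  have key2 : ∀ p, Feas1 N pbar p → Feas2 N pbar ω u (⨅ k, (ω k)⁻¹ * u k p) p := by
    intro p ⟨hpO, hpN⟩
    refine ⟨le_ciInf fun k => mul_nonneg (inv_pos.mpr (hω k)).le (hupos p hpO k), hpO, hpN, fun k => ?_⟩
    have h := ciInf_le (hbdd p) k
    calc (⨅ k, (ω k)⁻¹ * u k p) * ω k ≤ ((ω k)⁻¹ * u k p) * ω k :=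
          mul_le_mul_of_nonneg_right h (hω k).le
      _ = u k p := by rw [mul_comm, ← mul_assoc, mul_inv_cancel₀ (hω k).ne', one_mul]
  have ppos : ∀ p ∈ NonnegOrth K, ∀ i, 0 < u i p → 0 < p i := by
    intro p hp i hu
    rw [(hA i).2.2 p hp] at hu
    rcases div_pos_iff.mp hu with ⟨h, _⟩ | ⟨_, h⟩
    · exact h
    · exact absurd h (not_lt.mpr ((hA i).1.1 p hp).le)
  -- part (a)
  have partA : ∀ cstar pstar, Sol2 N pbar ω u cstar pstar → Sol1 N pbar ω u pstar := by
    intro cstar pstar ⟨hF, hOpt⟩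
    refine ⟨⟨hF.2.1, hF.2.2.1⟩, fun q hq => ?_⟩
    exact le_trans (hOpt _ _ (key2 q hq)) (key1 _ _ hF)
  -- part (b)
  have partB : ∀ pstar, Sol1 N pbar ω u pstar →
      Sol2 N pbar ω u (⨅ k, (ω k)⁻¹ * u k pstar) pstar := by
    intro pstar ⟨hF, hOpt⟩
    refine ⟨key2 _ hF, fun c' p' hF' => ?_⟩
    exact le_trans (key1 _ _ hF') (hOpt p' ⟨hF'.2.1, hF'.2.2.1⟩)
  refine ⟨partA, partB, ?_, ?_⟩
  · intro cstar pstar ⟨hF, hOpt⟩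
    have hcs : 0 < cstar := lt_of_lt_of_le hc0 (hOpt _ _ (key2 q0 hq0F))
    have hu : ∀ k, 0 < u k pstar := fun k =>
      lt_of_lt_of_le (mul_pos hcs (hω k)) (hF.2.2.2 k)
    exact ⟨hcs, hu, fun i => ppos pstar hF.2.1 i (hu i)⟩
  · intro pstar ⟨hF, hOpt⟩
    have hcs : 0 < ⨅ k, (ω k)⁻¹ * u k pstar := lt_of_lt_of_le hc0 (hOpt q0 hq0F)
    have hu : ∀ k, 0 < u k pstar := by
      intro k
      have h := lt_of_lt_of_le hcs (ciInf_le (hbdd pstar) k)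
      nlinarith [inv_pos.mpr (hω k), hω k, (hω k).le]
    exact ⟨hcs, hu, fun i => ppos pstar hF.1 i (hu i)⟩
end

section
/- Let ‖·‖ be a monotone norm on ℝ^K, p̄ > 0, weights ω ∈ ℝ_{>0}^K, and utility functions u_1,…,u_K satisfying Assumption 1 with associated standard interference functions f_1,…,f_K; define T(p) := (ω_1 f_1(p), …, ω_K f_K(p)). Consider Problem (2): maximize c over (c,p) ∈ ℝ_{≥0} × ℝ_{≥0}^K subject to ‖p‖ ≤ p̄ and u_k(p) ≥ c·ω_k for all k; and Problem (4): maximize c over (c,p) ∈ ℝ_{≥0} × ℝ_{≥0}^K subject to ‖p‖ ≤ p̄ and p = c·T(p). If (c*, p*) solves Problem (2), then there exists p' ∈ ℝ_{>0}^K with p' ≤ p* coordinatewise such that (c*, p') is simultaneously an optimal solution of Problem (2) and of Problem (4). -/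
open Filter Topology MeasureTheory

/-- Proposition 2 (i): if `(c*, p*)` solves problem (2), then there exists a strictly
positive `p' ≤ p*` such that `(c*, p')` is a common solution of problems (2) and (4). -/
theorem stmt6 {K : ℕ} (hK : 0 < K) (N : (Fin K → ℝ) → ℝ) (hN : IsMonoNorm N)
    (pbar : ℝ) (hpbar : 0 < pbar)
    (ω : Fin K → ℝ) (hω : ∀ k, 0 < ω k)
    (u f : Fin K → (Fin K → ℝ) → ℝ) (hA : Assumption1 u f)
    (T : (Fin K → ℝ) → Fin K → ℝ) (hT : ∀ p k, T p k = ω k * f k p)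
    (cstar : ℝ) (pstar : Fin K → ℝ) (hsol : Sol2 N pbar ω u cstar pstar) :
    ∃ p' : Fin K → ℝ, (∀ i, 0 < p' i) ∧ (∀ i, p' i ≤ pstar i) ∧
      Sol2 N pbar ω u cstar p' ∧ Sol4 N pbar T cstar p' := by
  classical
  haveI : Nonempty (Fin K) := ⟨⟨0, hK⟩⟩
  obtain ⟨⟨hc0, hpnn, hpN, hpu⟩, hopt⟩ := hsol
  have hfpos : ∀ k, ∀ x ∈ NonnegOrth K, 0 < f k x := fun k => ((hA k).1).1
  have hfmono : ∀ k, ∀ x ∈ NonnegOrth K, ∀ y ∈ NonnegOrth K, (∀ i, y i ≤ x i) → f k y ≤ f k x :=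
    fun k => ((hA k).1).2.1
  have hfcont : ∀ k, ContinuousOn (f k) (NonnegOrth K) := fun k => (hA k).2.1
  have hueq : ∀ k, ∀ p ∈ NonnegOrth K, u k p = p k / f k p := fun k => (hA k).2.2
  -- Step 1: cstar > 0
  have hone : (fun _ : Fin K => (1:ℝ)) ∈ NonnegOrth K := fun i => zero_le_one
  have hNone : 0 < N (fun _ => 1) := by
    rcases (hN.1 (fun _ => 1)).lt_or_eq with h | h
    · exact h
    · exfalso
      have h2 := (hN.2.1 _).mp h.symm
      have h3 := congrFun h2 ⟨0, hK⟩
      norm_num at h3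
  set ε : ℝ := pbar / N (fun _ => 1) with hε
  have hεpos : 0 < ε := div_pos hpbar hNone
  set p0 : Fin K → ℝ := fun _ => ε with hp0
  have hp0nn : p0 ∈ NonnegOrth K := fun i => hεpos.le
  have hp0N : N p0 ≤ pbar := by
    have : p0 = ε • (fun _ : Fin K => (1:ℝ)) := by funext i; simp [hp0]
    rw [this, hN.2.2.1, abs_of_pos hεpos, hε, div_mul_cancel₀]
    exact hNone.ne'
  have hup0 : ∀ k, 0 < u k p0 := by
    intro k
    rw [hueq k p0 hp0nn]
    exact div_pos hεpos (hfpos k p0 hp0nn)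
  set c0 : ℝ := Finset.univ.inf' Finset.univ_nonempty (fun k => u k p0 / ω k) with hc0def
  have hc0pos : 0 < c0 := by
    rw [hc0def, Finset.lt_inf'_iff]
    intro k _
    exact div_pos (hup0 k) (hω k)
  have hcstar : 0 < cstar := by
    refine lt_of_lt_of_le hc0pos (hopt c0 p0 ⟨hc0pos.le, hp0nn, hp0N, ?_⟩)
    intro k
    have : c0 ≤ u k p0 / ω k := Finset.inf'_le _ (Finset.mem_univ k)
    exact (le_div_iff₀ (hω k)).mp this
  -- Step 2: the decreasing sequence
  set g : (Fin K → ℝ) → (Fin K → ℝ) := fun p k => cstar * (ω k * f k p) with hgdef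
  set seq : ℕ → Fin K → ℝ := fun n => g^[n] pstar with hseqdef
  have hseq0 : seq 0 = pstar := rfl
  have hseqS : ∀ n, seq (n+1) = g (seq n) := by
    intro n
    simp only [hseqdef, Function.iterate_succ_apply']
  have hgnn : ∀ x ∈ NonnegOrth K, g x ∈ NonnegOrth K := by
    intro x hx k
    have := hfpos k x hx
    have := hω k
    positivity
  have key : ∀ n, seq n ∈ NonnegOrth K ∧ ∀ k, seq (n+1) k ≤ seq n k := by
    intro n
    induction n with
    | zero =>
      refine ⟨hpnn, fun k => ?_⟩
      rw [hseqS 0, hseq0]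
      have h1 : cstar * ω k ≤ pstar k / f k pstar := by
        rw [← hueq k pstar hpnn]; exact hpu k
      have h2 := (le_div_iff₀ (hfpos k pstar hpnn)).mp h1
      calc g pstar k = cstar * ω k * f k pstar := by rw [hgdef]; ring
        _ ≤ pstar k := h2
    | succ n ih =>
      have hmem : seq (n+1) ∈ NonnegOrth K := by
        rw [hseqS n]; exact hgnn _ ih.1
      refine ⟨hmem, fun k => ?_⟩
      have e2 : seq (n+2) k = cstar * (ω k * f k (seq (n+1))) := by
        rw [hseqS (n+1)]
      have e1 : seq (n+1) k = cstar * (ω k * f k (seq n)) := by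
        rw [hseqS n]
      rw [e2, e1]
      have hm := hfmono k (seq n) ih.1 (seq (n+1)) hmem ih.2
      exact mul_le_mul_of_nonneg_left (mul_le_mul_of_nonneg_left hm (hω k).le) hcstar.le
  have hanti : ∀ k, Antitone (fun n => seq n k) :=
    fun k => antitone_nat_of_succ_le (fun n => (key n).2 k)
  have hbdd : ∀ k, BddBelow (Set.range (fun n => seq n k)) := by
    intro k
    exact ⟨0, by rintro x ⟨n, rfl⟩; exact (key n).1 k⟩
  set p' : Fin K → ℝ := fun k => ⨅ n, seq n k with hp'def
  have htend : ∀ k, Filter.Tendsto (fun n => seq n k) Filter.atTop (nhds (p' k)) :=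
    fun k => tendsto_atTop_ciInf (hanti k) (hbdd k)
  have hp'nn : p' ∈ NonnegOrth K := by
    intro k
    exact le_ciInf (fun n => (key n).1 k)
  have hp'le : ∀ k, p' k ≤ pstar k := by
    intro k
    have := ciInf_le (hbdd k) 0
    rwa [hseq0] at this
  have htendp : Filter.Tendsto seq Filter.atTop (nhds p') :=
    tendsto_pi_nhds.mpr htend
  have htendin : Filter.Tendsto seq Filter.atTop (nhdsWithin p' (NonnegOrth K)) := by
    rw [tendsto_nhdsWithin_iff]
    exact ⟨htendp, Filter.Eventually.of_forall (fun n => (key n).1)⟩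
  have hftend : ∀ k, Filter.Tendsto (fun n => f k (seq n)) Filter.atTop (nhds (f k p')) := by
    intro k
    exact ((hfcont k p' hp'nn).tendsto).comp htendin
  have hfix : ∀ k, p' k = cstar * (ω k * f k p') := by
    intro k
    have h1 : Filter.Tendsto (fun n => seq (n+1) k) Filter.atTop (nhds (p' k)) :=
      (htend k).comp (Filter.tendsto_add_atTop_nat 1)
    have h2 : Filter.Tendsto (fun n => seq (n+1) k) Filter.atTop
        (nhds (cstar * (ω k * f k p'))) := by
      have : (fun n => seq (n+1) k) = fun n => cstar * (ω k * f k (seq n)) := by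
        funext n; rw [hseqS n]
      rw [this]
      exact (tendsto_const_nhds.mul ((tendsto_const_nhds.mul (hftend k))))
    exact tendsto_nhds_unique h1 h2
  have hfp'pos : ∀ k, 0 < f k p' := fun k => hfpos k p' hp'nn
  have hp'pos : ∀ k, 0 < p' k := by
    intro k
    rw [hfix k]
    have := hω k
    have := hfp'pos k
    positivity
  have hNp' : N p' ≤ pbar :=
    le_trans (hN.2.2.2.2 p' pstar hp'nn hp'le) hpN
  have hup' : ∀ k, u k p' = cstar * ω k := by
    intro k
    rw [hueq k p' hp'nn, hfix k, mul_div_assoc, mul_div_assoc,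
      div_self (hfp'pos k).ne', mul_one]
  have hfix' : p' = cstar • T p' := by
    funext k
    rw [Pi.smul_apply, hT, smul_eq_mul, hfix k]
  have hfeas2 : Feas2 N pbar ω u cstar p' :=
    ⟨hcstar.le, hp'nn, hNp', fun k => (hup' k).ge⟩
  refine ⟨p', hp'pos, hp'le, ⟨hfeas2, hopt⟩, ⟨⟨hcstar.le, hp'nn, hNp', hfix'⟩, ?_⟩⟩
  rintro c' p'' ⟨hc', hp''nn, hp''N, hfx⟩
  refine hopt c' p'' ⟨hc', hp''nn, hp''N, fun k => ?_⟩
  have hk : p'' k = c' * (ω k * f k p'') := by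
    have := congrFun hfx k
    rwa [Pi.smul_apply, hT, smul_eq_mul] at this
  rw [hueq k p'' hp''nn, hk, mul_div_assoc, mul_div_assoc,
    div_self (hfpos k p'' hp''nn).ne', mul_one]
end

section
/- Let ‖·‖ be a monotone norm on ℝ^K, p̄ > 0, and let T : ℝ_{≥0}^K → ℝ_{>0}^K be a continuous standard interference mapping. Define the normalized mapping T̃ : ℝ_{≥0}^K → ℝ_{>0}^K by T̃(p) := (p̄ / ‖T(p)‖)·T(p). Then: (a) T̃ has a unique fixed point p* ∈ ℝ_{>0}^K; (b) the problem of maximizing c over (c,p) ∈ ℝ_{≥0} × ℝ_{≥0}^K subject to ‖p‖ ≤ p̄ and p = c·T(p) has the unique optimal solution (p̄/‖T(p*)‖, p*); and (c) for any starting point p_1 ∈ ℝ_{≥0}^K, the sequence generated by p_{n+1} = T̃(p_n) converges to p*. -/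
open Filter Topology MeasureTheory

/-!
The quantity `M(p, q) M(q, p)`, with `M(p, q) = maxₖ pₖ / qₖ`, is the exponential of Hilbert's
projective metric. It is invariant under rescaling either argument, and a standard interference
mapping strictly decreases it on the positive part of a sphere of a monotone norm: there
`M(p, q) ≥ 1` and `M(q, p) ≥ 1`, one of them strictly when `p ≠ q`, and by scalability
`M(T p, T q) < M(p, q)` as soon as `M(p, q) > 1`. Hence the normalized map `T̃` is contractive
for it on the compact set `T̃(S)`, `S` the nonnegative part of the sphere of radius `p̄`, and
Edelstein's argument gives a unique fixed point attracting every orbit. For problem (4),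
scalability shows that the positive fixed points of `c • T` grow with `c`, strictly in norm,
which pins down the optimum.
-/

open Filter Topology Set Function

section Contractive

variable {X : Type*} [TopologicalSpace X] {F : X → X} {D : X → X → ℝ} {s : Set X}

theorem IsCompact.exists_isFixedPt_of_contractive (hs : IsCompact s) (hne : s.Nonempty)
    (hF : ContinuousOn F s) (hFs : MapsTo F s s) (hD : ContinuousOn (uncurry D) (s ×ˢ s))
    (hcontr : ∀ x ∈ s, ∀ y ∈ s, x ≠ y → D (F x) (F y) < D x y) :
    ∃ x ∈ s, IsFixedPt F x := by
  obtain ⟨x, hx, hmin⟩ := hs.exists_isMinOn hne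
    (hD.comp (continuousOn_id.prodMk hF) fun y hy => ⟨hy, hFs hy⟩)
  refine ⟨x, hx, of_not_not fun hfix => ?_⟩
  exact (hcontr x hx (F x) (hFs hx) (Ne.symm hfix)).not_ge (hmin (hFs hx))

theorem IsCompact.tendsto_iterate_of_contractive [FirstCountableTopology X] (hs : IsCompact s)
    (hF : ContinuousOn F s) (hFs : MapsTo F s s) (hD : ContinuousOn (uncurry D) (s ×ˢ s))
    (hcontr : ∀ x ∈ s, ∀ y ∈ s, x ≠ y → D (F x) (F y) < D x y)
    {x : X} (hx : x ∈ s) (hfix : IsFixedPt F x) {y : X} (hy : y ∈ s) :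
    Tendsto (fun n => F^[n] y) atTop (𝓝 x) := by
  set u : ℕ → X := fun n => F^[n] y
  have hus : ∀ n, u n ∈ s := fun n => hFs.iterate n hy
  have hu_succ : ∀ n, u (n + 1) = F (u n) := fun n => iterate_succ_apply' F n y
  have hDx : ContinuousOn (D · x) s :=
    hD.comp (continuousOn_id.prodMk continuousOn_const) fun z hz => ⟨hz, hx⟩
  have hanti : Antitone fun n => D (u n) x := by
    refine antitone_nat_of_succ_le fun n => ?_
    rw [hu_succ]
    rcases eq_or_ne (u n) x with h | h
    · rw [h, hfix]
    · simpa only [hfix.eq] using (hcontr _ (hus n) x hx h).le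
  obtain ⟨L, hL⟩ : ∃ L, Tendsto (fun n => D (u n) x) atTop (𝓝 L) :=
    ⟨_, tendsto_atTop_ciInf hanti ((hs.bddBelow_image hDx).mono (range_subset_iff.2
      fun n => mem_image_of_mem _ (hus n)))⟩
  -- Along a subsequence converging to `z`, both `D z x` and `D (F z) x` equal `L`.
  refine hs.tendsto_nhds_of_unique_mapClusterPt (.of_forall hus) fun z hz hclus => ?_
  obtain ⟨φ, hφ, huφ⟩ := hclus.tendsto_subseq
  have hwithin_s : ∀ {v : ℕ → X} {w : X}, (∀ n, v n ∈ s) → Tendsto v atTop (𝓝 w) →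
      Tendsto v atTop (𝓝[s] w) := fun hv h => tendsto_nhdsWithin_iff.2 ⟨h, .of_forall hv⟩
  have hFz : Tendsto (fun j => u (φ j + 1)) atTop (𝓝 (F z)) := by
    simpa only [hu_succ, comp_def] using (hF z hz).tendsto.comp (hwithin_s (fun j => hus _) huφ)
  have hLz : D z x = L := tendsto_nhds_unique
    ((hDx z hz).tendsto.comp (hwithin_s (fun j => hus _) huφ)) (hL.comp hφ.tendsto_atTop)
  have hLFz : D (F z) x = L := tendsto_nhds_unique
    ((hDx (F z) (hFs hz)).tendsto.comp (hwithin_s (fun j => hus _) hFz))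
    (hL.comp ((tendsto_add_atTop_nat 1).comp hφ.tendsto_atTop))
  by_contra hzx
  have := hcontr z hz x hx hzx
  rw [hfix.eq, hLz, hLFz] at this
  exact this.false

end Contractive

section MaxRatio

variable {ι : Type*} [Fintype ι] [Nonempty ι] {p q : ι → ℝ} {a b α : ℝ}

noncomputable def maxRatio (p q : ι → ℝ) : ℝ :=
  Finset.univ.sup' Finset.univ_nonempty fun k => p k / q k

-- The exponential of Hilbert's projective metric.
noncomputable def hilbertRatio (p q : ι → ℝ) : ℝ := maxRatio p q * maxRatio q p

lemma maxRatio_le_iff (hq : ∀ k, 0 < q k) : maxRatio p q ≤ α ↔ ∀ k, p k ≤ α * q k := by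
  simp only [maxRatio, Finset.sup'_le_iff, Finset.mem_univ, true_implies, div_le_iff₀ (hq _)]

lemma maxRatio_lt_iff (hq : ∀ k, 0 < q k) : maxRatio p q < α ↔ ∀ k, p k < α * q k := by
  simp only [maxRatio, Finset.sup'_lt_iff, Finset.mem_univ, true_implies, div_lt_iff₀ (hq _)]

lemma maxRatio_le_one_iff (hq : ∀ k, 0 < q k) : maxRatio p q ≤ 1 ↔ ∀ k, p k ≤ q k := by
  simp only [maxRatio_le_iff hq, one_mul]

lemma le_maxRatio_mul (hq : ∀ k, 0 < q k) (k : ι) : p k ≤ maxRatio p q * q k :=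
  (maxRatio_le_iff hq).1 le_rfl k

lemma maxRatio_pos (hp : ∀ k, 0 < p k) (hq : ∀ k, 0 < q k) : 0 < maxRatio p q := by
  obtain ⟨k⟩ := ‹Nonempty ι›
  exact pos_of_mul_pos_left ((hp k).trans_le (le_maxRatio_mul hq k)) (hq k).le

lemma maxRatio_smul_smul (ha : 0 < a) (hb : 0 < b) :
    maxRatio (a • p) (b • q) = a / b * maxRatio p q := by
  simp only [maxRatio, Finset.mul₀_sup' (div_pos ha hb).le, Pi.smul_apply, smul_eq_mul,
    mul_div_mul_comm]

lemma hilbertRatio_smul_smul (ha : 0 < a) (hb : 0 < b) :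
    hilbertRatio (a • p) (b • q) = hilbertRatio p q := by
  rw [hilbertRatio, hilbertRatio, maxRatio_smul_smul ha hb, maxRatio_smul_smul hb ha]
  field_simp

lemma continuousOn_maxRatio :
    ContinuousOn (fun x : (ι → ℝ) × (ι → ℝ) => maxRatio x.1 x.2) {x | ∀ k, x.2 k ≠ 0} :=
  ContinuousOn.finset_sup'_apply _ fun k _ =>
    ((continuous_apply k).comp continuous_fst).continuousOn.div
      ((continuous_apply k).comp continuous_snd).continuousOn fun _ hx => hx k

lemma continuousOn_hilbertRatio :
    ContinuousOn (uncurry hilbertRatio)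
      {x : (ι → ℝ) × (ι → ℝ) | (∀ k, x.1 k ≠ 0) ∧ ∀ k, x.2 k ≠ 0} :=
  (continuousOn_maxRatio.mono fun _ hx => hx.2).mul
    (continuousOn_maxRatio.comp continuous_swap.continuousOn fun _ hx => hx.1)

end MaxRatio

namespace IsMonoNorm

variable {K : ℕ} {N : (Fin K → ℝ) → ℝ} {p q : Fin K → ℝ} {a : ℝ}

lemma smul_of_nonneg (hN : IsMonoNorm N) (ha : 0 ≤ a) (x : Fin K → ℝ) :
    N (a • x) = a * N x := by
  rw [hN.2.2.1, abs_of_nonneg ha]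

lemma mono (hN : IsMonoNorm N) (hp : p ∈ NonnegOrth K) (hpq : ∀ i, p i ≤ q i) : N p ≤ N q :=
  hN.2.2.2.2 p q hp hpq

lemma pos_of_pos [Nonempty (Fin K)] (hN : IsMonoNorm N) (hp : ∀ i, 0 < p i) : 0 < N p := by
  obtain ⟨i⟩ := ‹Nonempty (Fin K)›
  refine (hN.1 p).lt_of_ne fun h => (hp i).ne' ?_
  rw [(hN.2.1 p).1 h.symm, Pi.zero_apply]

protected lemma continuous (hN : IsMonoNorm N) : Continuous N := by
  let n : Seminorm ℝ (Fin K → ℝ) := .of N hN.2.2.2.1 fun a x => by rw [hN.2.2.1, Real.norm_eq_abs]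
  exact continuousOn_univ.1 (n.convexOn.continuousOn isOpen_univ)

lemma mul_norm_single_le (hN : IsMonoNorm N) (hp : p ∈ NonnegOrth K) (i : Fin K) :
    p i * N (Pi.single i 1) ≤ N p := by
  rw [← hN.smul_of_nonneg (hp i)]
  refine hN.mono (fun j => ?_) fun j => ?_ <;> rcases eq_or_ne j i with rfl | hji <;>
    simp [*, hp j]

lemma isCompact_sphere (hN : IsMonoNorm N) (r : ℝ) :
    IsCompact {p ∈ NonnegOrth K | N p = r} := by
  have hsingle (i : Fin K) : 0 < N (Pi.single i 1) :=
    (hN.1 _).lt_of_ne fun h => by simpa using congrFun ((hN.2.1 _).1 h.symm) i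
  have hclosed : IsClosed (NonnegOrth K) := by
    simp only [NonnegOrth, ofPred_forall]
    exact isClosed_iInter fun i => isClosed_le continuous_const (continuous_apply i)
  refine (isCompact_univ_pi fun i => isCompact_Icc (a := 0) (b := r / N (Pi.single i 1)))
    |>.of_isClosed_subset (hclosed.inter (isClosed_eq hN.continuous continuous_const)) ?_
  rintro p ⟨hp, rfl⟩
  exact fun i _ => ⟨hp i, (le_div_iff₀ (hsingle i)).2 (hN.mul_norm_single_le hp i)⟩

lemma one_le_maxRatio [Nonempty (Fin K)] (hN : IsMonoNorm N) (hp : ∀ i, 0 < p i)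
    (hq : ∀ i, 0 < q i) (hpq : N q ≤ N p) : 1 ≤ maxRatio p q := by
  by_contra! h
  have hle : N p ≤ maxRatio p q * N q := by
    rw [← hN.smul_of_nonneg (maxRatio_pos hp hq).le]
    exact hN.mono (fun i => (hp i).le) fun i => le_maxRatio_mul hq i
  nlinarith [hN.pos_of_pos hq]

end IsMonoNorm

def StdIFMap {K : ℕ} (T : (Fin K → ℝ) → Fin K → ℝ) : Prop := ∀ k, StdIF fun p => T p k

namespace StdIFMap

variable {K : ℕ} {N : (Fin K → ℝ) → ℝ} {T : (Fin K → ℝ) → Fin K → ℝ} {p q : Fin K → ℝ}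
  {c d α : ℝ}

lemma pos (hT : StdIFMap T) (hp : p ∈ NonnegOrth K) (k : Fin K) : 0 < T p k :=
  (hT k).1 p hp

lemma mono (hT : StdIFMap T) (hp : p ∈ NonnegOrth K) (hq : q ∈ NonnegOrth K)
    (hpq : ∀ i, p i ≤ q i) (k : Fin K) : T p k ≤ T q k :=
  (hT k).2.1 q hq p hp hpq

lemma apply_smul_lt (hT : StdIFMap T) (hp : p ∈ NonnegOrth K) (hα : 1 < α) (k : Fin K) :
    T (α • p) k < α * T p k :=
  (hT k).2.2 p hp α hα

lemma maxRatio_apply_lt [Nonempty (Fin K)] (hT : StdIFMap T) (hp : p ∈ NonnegOrth K)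
    (hq : ∀ i, 0 < q i) (h : 1 < maxRatio p q) :
    maxRatio (T p) (T q) < maxRatio p q := by
  have hq' : q ∈ NonnegOrth K := fun i => (hq i).le
  refine (maxRatio_lt_iff (hT.pos hq')).2 fun k => ?_
  calc T p k ≤ T (maxRatio p q • q) k :=
        hT.mono hp (fun i => mul_nonneg (zero_le_one.trans h.le) (hq' i))
          (fun i => le_maxRatio_mul hq i) k
    _ < maxRatio p q * T q k := hT.apply_smul_lt hq' h k

lemma maxRatio_apply_le [Nonempty (Fin K)] (hT : StdIFMap T) (hp : p ∈ NonnegOrth K)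
    (hq : ∀ i, 0 < q i) (h : 1 ≤ maxRatio p q) :
    maxRatio (T p) (T q) ≤ maxRatio p q := by
  rcases h.eq_or_lt with h | h
  · rw [← h, maxRatio_le_one_iff (hT.pos fun i => (hq i).le)]
    exact hT.mono hp (fun i => (hq i).le) ((maxRatio_le_one_iff hq).1 h.ge)
  · exact (hT.maxRatio_apply_lt hp hq h).le

lemma hilbertRatio_apply_lt [Nonempty (Fin K)] (hT : StdIFMap T) (hN : IsMonoNorm N)
    (hp : ∀ i, 0 < p i) (hq : ∀ i, 0 < q i) (hNpq : N p = N q) (hpq : p ≠ q) :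
    hilbertRatio (T p) (T q) < hilbertRatio p q := by
  have hp' : p ∈ NonnegOrth K := fun i => (hp i).le
  have hq' : q ∈ NonnegOrth K := fun i => (hq i).le
  have h₁ := hN.one_le_maxRatio hp hq hNpq.ge
  have h₂ := hN.one_le_maxRatio hq hp hNpq.le
  have hTqp := maxRatio_pos (hT.pos hq') (hT.pos hp')
  rcases h₁.eq_or_lt with h₁ | h₁
  · -- `M(p, q) = 1` means `p ≤ q`, so `p ≠ q` forces `M(q, p) > 1`.
    have h₂ : 1 < maxRatio q p := by
      refine h₂.lt_of_ne fun h₂ => hpq (funext fun i => le_antisymm ?_ ?_)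
      · exact (maxRatio_le_one_iff hq).1 h₁.ge i
      · exact (maxRatio_le_one_iff hp).1 h₂.ge i
    exact mul_lt_mul' (hT.maxRatio_apply_le hp' hq h₁.le) (hT.maxRatio_apply_lt hq' hp h₂)
      hTqp.le (zero_lt_one.trans_le h₁.le)
  · exact mul_lt_mul (hT.maxRatio_apply_lt hp' hq h₁) (hT.maxRatio_apply_le hq' hp h₂)
      hTqp (zero_lt_one.trans h₁).le

lemma fixedPt_smul_mono [Nonempty (Fin K)] (hT : StdIFMap T) (hd : 0 < d) (hdc : d ≤ c)
    (hp : p ∈ NonnegOrth K) (hq : q ∈ NonnegOrth K) (hfp : p = c • T p) (hfq : q = d • T q)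
    (i : Fin K) : q i ≤ p i := by
  have hp_pos : ∀ i, 0 < p i := fun i => by
    rw [hfp]; exact mul_pos (hd.trans_le hdc) (hT.pos hp i)
  suffices maxRatio q p ≤ 1 from (maxRatio_le_one_iff hp_pos).1 this i
  by_contra! h
  have hTqp := maxRatio_pos (hT.pos hq) (hT.pos hp)
  have : maxRatio q p ≤ maxRatio (T q) (T p) := by
    conv_lhs => rw [hfq, hfp]
    rw [maxRatio_smul_smul hd (hd.trans_le hdc)]
    exact mul_le_of_le_one_left hTqp.le ((div_le_one₀ (hd.trans_le hdc)).2 hdc)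
  exact (hT.maxRatio_apply_lt hq hp_pos h).not_ge this

end StdIFMap

section Normalized

variable {K : ℕ} [Nonempty (Fin K)] {N : (Fin K → ℝ) → ℝ} {T : (Fin K → ℝ) → Fin K → ℝ}
  {pbar : ℝ} {p : Fin K → ℝ}

noncomputable def normalizedMap (N : (Fin K → ℝ) → ℝ) (pbar : ℝ) (T : (Fin K → ℝ) → Fin K → ℝ)
    (p : Fin K → ℝ) : Fin K → ℝ :=
  (pbar / N (T p)) • T p

lemma norm_apply_pos (hN : IsMonoNorm N) (hT : StdIFMap T) (hp : p ∈ NonnegOrth K) :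
    0 < N (T p) :=
  hN.pos_of_pos (hT.pos hp)

lemma normalizedMap_pos (hN : IsMonoNorm N) (hpbar : 0 < pbar) (hT : StdIFMap T)
    (hp : p ∈ NonnegOrth K) (i : Fin K) : 0 < normalizedMap N pbar T p i :=
  mul_pos (div_pos hpbar (norm_apply_pos hN hT hp)) (hT.pos hp i)

lemma norm_normalizedMap (hN : IsMonoNorm N) (hpbar : 0 < pbar) (hT : StdIFMap T)
    (hp : p ∈ NonnegOrth K) : N (normalizedMap N pbar T p) = pbar := by
  have := norm_apply_pos hN hT hp
  rw [normalizedMap, hN.smul_of_nonneg (div_pos hpbar this).le, div_mul_cancel₀ _ this.ne']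

lemma continuousOn_normalizedMap (hN : IsMonoNorm N) (hT : StdIFMap T)
    (hTc : ContinuousOn T (NonnegOrth K)) :
    ContinuousOn (normalizedMap N pbar T) (NonnegOrth K) :=
  (continuousOn_const.div (hN.continuous.comp_continuousOn hTc)
    fun _ hp => (norm_apply_pos hN hT hp).ne').smul hTc

lemma hilbertRatio_normalizedMap (hN : IsMonoNorm N) (hpbar : 0 < pbar) (hT : StdIFMap T)
    {q : Fin K → ℝ} (hp : p ∈ NonnegOrth K) (hq : q ∈ NonnegOrth K) :
    hilbertRatio (normalizedMap N pbar T p) (normalizedMap N pbar T q) =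
      hilbertRatio (T p) (T q) :=
  hilbertRatio_smul_smul (div_pos hpbar (norm_apply_pos hN hT hp))
    (div_pos hpbar (norm_apply_pos hN hT hq))

theorem exists_isFixedPt_tendsto_iterate_normalizedMap (hN : IsMonoNorm N) (hpbar : 0 < pbar)
    (hT : StdIFMap T) (hTc : ContinuousOn T (NonnegOrth K)) :
    ∃ pstar, (∀ i, 0 < pstar i) ∧ IsFixedPt (normalizedMap N pbar T) pstar ∧
      ∀ p ∈ NonnegOrth K, Tendsto (fun n => (normalizedMap N pbar T)^[n] p) atTop (𝓝 pstar) := by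
  set F := normalizedMap N pbar T
  set S := {p ∈ NonnegOrth K | N p = pbar}
  have hFS : ∀ p ∈ NonnegOrth K, F p ∈ S := fun p hp =>
    ⟨fun i => (normalizedMap_pos hN hpbar hT hp i).le, norm_normalizedMap hN hpbar hT hp⟩
  have hF : ContinuousOn F S := (continuousOn_normalizedMap hN hT hTc).mono fun _ hp => hp.1
  -- Unlike `S`, its image `F '' S` stays away from the boundary of the orthant.
  set C := F '' S
  have hCpos : ∀ p ∈ C, ∀ i, 0 < p i := by
    rintro _ ⟨p, hp, rfl⟩
    exact normalizedMap_pos hN hpbar hT hp.1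
  have hCS : C ⊆ S := by
    rintro _ ⟨p, hp, rfl⟩
    exact hFS p hp.1
  have hC : IsCompact C := (hN.isCompact_sphere pbar).image_of_continuousOn hF
  have hFC : MapsTo F C C := fun p hp => mem_image_of_mem F (hCS hp)
  have hD : ContinuousOn (uncurry hilbertRatio) (C ×ˢ C) :=
    continuousOn_hilbertRatio.mono fun x hx =>
      ⟨fun i => (hCpos _ hx.1 i).ne', fun i => (hCpos _ hx.2 i).ne'⟩
  have hcontr : ∀ p ∈ C, ∀ q ∈ C, p ≠ q → hilbertRatio (F p) (F q) < hilbertRatio p q :=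
    fun p hp q hq hpq => by
      rw [hilbertRatio_normalizedMap hN hpbar hT (hCS hp).1 (hCS hq).1]
      exact hT.hilbertRatio_apply_lt hN (hCpos p hp) (hCpos q hq)
        ((hCS hp).2.trans (hCS hq).2.symm) hpq
  have hCne : C.Nonempty := ⟨_, mem_image_of_mem F (hFS 0 fun _ => le_rfl)⟩
  obtain ⟨pstar, hpstar, hfix⟩ :=
    hC.exists_isFixedPt_of_contractive hCne (hF.mono hCS) hFC hD hcontr
  refine ⟨pstar, hCpos pstar hpstar, hfix, fun p hp => (tendsto_add_atTop_iff_nat 2).1 ?_⟩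
  simpa only [iterate_add_apply, iterate_succ_apply, iterate_zero_apply] using
    hC.tendsto_iterate_of_contractive (hF.mono hCS) hFC hD hcontr hpstar hfix
      (mem_image_of_mem F (hFS p hp))

end Normalized

section Problem4

variable {K : ℕ} [Nonempty (Fin K)] {N : (Fin K → ℝ) → ℝ} {T : (Fin K → ℝ) → Fin K → ℝ}
  {pbar c c' : ℝ} {p p' : Fin K → ℝ}

lemma Feas4.le_of_eq_smul (hN : IsMonoNorm N) (hT : StdIFMap T) (hc : 0 < c)
    (hp : p ∈ NonnegOrth K) (hfix : p = c • T p) (hNp : N p = pbar)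
    (h : Feas4 N pbar T c' p') : c' ≤ c := by
  obtain ⟨-, hp', hNp', hfix'⟩ := h
  by_contra! hcc'
  have hc' := hc.trans hcc'
  -- `p ≤ p'` by monotonicity of the fixed points, hence `c' • p = c' c • T p ≤ c • p'`.
  have hle : ∀ i, (c' • p) i ≤ (c • p') i := fun i => by
    have hTle := hT.mono hp hp' (hT.fixedPt_smul_mono hc hcc'.le hp' hp hfix' hfix) i
    rw [hfix', hfix]
    simp only [Pi.smul_apply, smul_eq_mul]
    nlinarith [mul_le_mul_of_nonneg_left hTle (mul_pos hc hc').le]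
  have hpbar : 0 < pbar := hNp ▸ hN.pos_of_pos fun i => by
    rw [hfix]; exact mul_pos hc (hT.pos hp i)
  have := hN.mono (p := c' • p) (fun i => mul_nonneg hc'.le (hp i)) hle
  rw [hN.smul_of_nonneg hc'.le, hN.smul_of_nonneg hc.le, hNp] at this
  nlinarith

lemma sol4_of_eq_smul (hN : IsMonoNorm N) (hT : StdIFMap T) (hc : 0 < c)
    (hp : p ∈ NonnegOrth K) (hfix : p = c • T p) (hNp : N p = pbar) : Sol4 N pbar T c p :=
  ⟨⟨hc.le, hp, hNp.le, hfix⟩, fun _ _ h => h.le_of_eq_smul hN hT hc hp hfix hNp⟩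

lemma Sol4.eq_of_sol4 (hT : StdIFMap T) (hsol : Sol4 N pbar T c p) (hc : 0 < c)
    (h : Sol4 N pbar T c' p') : c' = c ∧ p' = p := by
  have hcc' : c' = c := le_antisymm (hsol.2 c' p' h.1) (h.2 c p hsol.1)
  subst hcc'
  obtain ⟨⟨-, hp, -, hfix⟩, -⟩ := hsol
  obtain ⟨⟨-, hp', -, hfix'⟩, -⟩ := h
  exact ⟨rfl, funext fun i => le_antisymm (hT.fixedPt_smul_mono hc le_rfl hp hp' hfix hfix' i)
    (hT.fixedPt_smul_mono hc le_rfl hp' hp hfix' hfix i)⟩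

end Problem4

/-- Proposition 2 (ii): the normalized mapping `T̃ p = (pbar / ‖T p‖) • T p` of a
continuous standard interference mapping `T` has a unique (strictly positive) fixed
point `p*`; the pair `(pbar / ‖T p*‖, p*)` is the unique solution of problem (4);
and the fixed point iteration `p_{n+1} = T̃ p_n` converges to `p*` from any starting
point in the nonnegative orthant. -/
theorem stmt7 {K : ℕ} (hK : 0 < K) (N : (Fin K → ℝ) → ℝ) (hN : IsMonoNorm N)
    (pbar : ℝ) (hpbar : 0 < pbar)
    (T : (Fin K → ℝ) → Fin K → ℝ) (hT : ∀ k, StdIF fun p => T p k)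
    (hTc : ContinuousOn T (NonnegOrth K))
    (Ttil : (Fin K → ℝ) → Fin K → ℝ)
    (hTtil : ∀ p, Ttil p = (pbar / N (T p)) • T p) :
    ∃ pstar : Fin K → ℝ, (∀ i, 0 < pstar i) ∧ Ttil pstar = pstar ∧
      (∀ q ∈ NonnegOrth K, Ttil q = q → q = pstar) ∧
      Sol4 N pbar T (pbar / N (T pstar)) pstar ∧
      (∀ c p, Sol4 N pbar T c p → c = pbar / N (T pstar) ∧ p = pstar) ∧
      ∀ p1 ∈ NonnegOrth K, Tendsto (fun n => Ttil^[n] p1) atTop (𝓝 pstar) := by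
  have : Nonempty (Fin K) := ⟨⟨0, hK⟩⟩
  obtain rfl : Ttil = normalizedMap N pbar T := funext hTtil
  obtain ⟨pstar, hpos, hfix, hconv⟩ :=
    exists_isFixedPt_tendsto_iterate_normalizedMap hN hpbar hT hTc
  have hps : pstar ∈ NonnegOrth K := fun i => (hpos i).le
  have hc : 0 < pbar / N (T pstar) := div_pos hpbar (norm_apply_pos hN hT hps)
  have hsol : Sol4 N pbar T (pbar / N (T pstar)) pstar :=
    sol4_of_eq_smul hN hT hc hps hfix.symm (hfix ▸ norm_normalizedMap hN hpbar hT hps)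
  refine ⟨pstar, hpos, hfix, fun q hq hfq => ?_, hsol, fun c p h => hsol.eq_of_sol4 hT hc h,
    hconv⟩
  exact tendsto_nhds_unique (tendsto_const_nhds.congr fun n => (iterate_fixed hfq n).symm)
    (hconv q hq)
end

section
/- Let ‖·‖ be a monotone norm on ℝ^K, p̄ > 0, weights ω ∈ ℝ_{>0}^K, and utility functions u_1,…,u_K satisfying Assumption 1 with associated standard interference functions f_1,…,f_K; define T(p) := (ω_1 f_1(p), …, ω_K f_K(p)). If (c*, p*) is an optimal solution of Problem (4) (maximize c subject to ‖p‖ ≤ p̄ and p = c·T(p)), then (c*, p*) is also an optimal solution of Problem (2) (maximize c subject to ‖p‖ ≤ p̄ and u_k(p) ≥ c·ω_k for all k), and consequently p* is an optimal solution of Problem (1) (maximize min_k ω_k^{−1} u_k(p) subject to ‖p‖ ≤ p̄). -/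
open Filter Topology MeasureTheory

/-- Auxiliary: from a point dominating `c • T` we can extract a fixed point of `c • T`
by monotone iteration. -/
lemma aux_fixed {K : ℕ} (N : (Fin K → ℝ) → ℝ) (hN : IsMonoNorm N)
    (pbar : ℝ) (ω : Fin K → ℝ) (hω : ∀ k, 0 < ω k)
    (f : Fin K → (Fin K → ℝ) → ℝ)
    (hstd : ∀ k, StdIF (f k)) (hcont : ∀ k, ContinuousOn (f k) (NonnegOrth K))
    (T : (Fin K → ℝ) → Fin K → ℝ) (hT : ∀ p k, T p k = ω k * f k p)
    (c : ℝ) (hc : 0 < c) (p : Fin K → ℝ) (hp : p ∈ NonnegOrth K) (hNp : N p ≤ pbar)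
    (hge : ∀ k, c * (ω k * f k p) ≤ p k) :
    ∃ q, Feas4 N pbar T c q := by
  set g : (Fin K → ℝ) → (Fin K → ℝ) := fun r k => c * (ω k * f k r) with hg
  set P : ℕ → Fin K → ℝ := fun n => g^[n] p with hP
  have hP0 : P 0 = p := rfl
  have hPs : ∀ n, P (n + 1) = g (P n) := fun n => Function.iterate_succ_apply' g n p
  have hPmem : ∀ n, P n ∈ NonnegOrth K := by
    intro n
    induction n with
    | zero => exact hp
    | succ n ih =>
      intro k
      rw [hPs]
      exact mul_nonneg hc.le (mul_nonneg (hω k).le ((hstd k).1 (P n) ih).le)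
  have hmono_g : ∀ r ∈ NonnegOrth K, ∀ s ∈ NonnegOrth K, (∀ i, s i ≤ r i) →
      ∀ k, g s k ≤ g r k := by
    intro r hr s hs hle k
    exact mul_le_mul_of_nonneg_left
      (mul_le_mul_of_nonneg_left ((hstd k).2.1 r hr s hs hle) (hω k).le) hc.le
  have hdec : ∀ n k, P (n + 1) k ≤ P n k := by
    intro n
    induction n with
    | zero => intro k; rw [hPs, hP0]; exact hge k
    | succ n ih =>
      intro k
      have h := hmono_g (P n) (hPmem n) (P (n+1)) (hPmem (n+1)) ih k
      rw [← hPs n] at h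
      rw [hPs (n+1)]
      exact h
  have hanti : ∀ k, Antitone fun n => P n k := fun k =>
    antitone_nat_of_succ_le fun n => hdec n k
  have hbdd : ∀ k, BddBelow (Set.range fun n => P n k) := by
    intro k
    exact ⟨0, by rintro x ⟨n, rfl⟩; exact hPmem n k⟩
  set q : Fin K → ℝ := fun k => ⨅ n, P n k with hq
  have htend : ∀ k, Filter.Tendsto (fun n => P n k) Filter.atTop (nhds (q k)) :=
    fun k => tendsto_atTop_ciInf (hanti k) (hbdd k)
  have hqmem : q ∈ NonnegOrth K := fun k => le_ciInf fun n => hPmem n k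
  have hqle : ∀ k, q k ≤ p k := fun k => ciInf_le (hbdd k) 0
  have hNq : N q ≤ pbar := le_trans (hN.2.2.2.2 q p hqmem hqle) hNp
  have htendP : Filter.Tendsto P Filter.atTop (nhds q) := tendsto_pi_nhds.2 htend
  have htendPin : Filter.Tendsto P Filter.atTop (nhdsWithin q (NonnegOrth K)) :=
    tendsto_nhdsWithin_of_tendsto_nhds_of_eventually_within _ htendP
      (Filter.Eventually.of_forall hPmem)
  have hf : ∀ k, Filter.Tendsto (fun n => f k (P n)) Filter.atTop (nhds (f k q)) :=
    fun k => Filter.Tendsto.comp (hcont k q hqmem) htendPin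
  have hfix : ∀ k, q k = c * (ω k * f k q) := by
    intro k
    have h1 : Filter.Tendsto (fun n => P (n + 1) k) Filter.atTop (nhds (q k)) :=
      (htend k).comp (Filter.tendsto_add_atTop_nat 1)
    have h2 : Filter.Tendsto (fun n => P (n + 1) k) Filter.atTop
        (nhds (c * (ω k * f k q))) := by
      have heq : (fun n => P (n + 1) k) = fun n => c * (ω k * f k (P n)) :=
        funext fun n => by rw [hPs]
      rw [heq]
      exact (((hf k).const_mul (ω k)).const_mul c)
    exact tendsto_nhds_unique h1 h2
  refine ⟨q, hc.le, hqmem, hNq, ?_⟩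
  funext k
  rw [Pi.smul_apply, smul_eq_mul, hT]
  exact hfix k

/-- Proposition 2 (iii): a solution `(c*, p*)` of problem (4) also solves problem (2),
and consequently `p*` solves problem (1). -/
theorem stmt8 {K : ℕ} (hK : 0 < K) (N : (Fin K → ℝ) → ℝ) (hN : IsMonoNorm N)
    (pbar : ℝ) (hpbar : 0 < pbar)
    (ω : Fin K → ℝ) (hω : ∀ k, 0 < ω k)
    (u f : Fin K → (Fin K → ℝ) → ℝ) (hA : Assumption1 u f)
    (T : (Fin K → ℝ) → Fin K → ℝ) (hT : ∀ p k, T p k = ω k * f k p)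
    (cstar : ℝ) (pstar : Fin K → ℝ) (hsol : Sol4 N pbar T cstar pstar) :
    Sol2 N pbar ω u cstar pstar ∧ Sol1 N pbar ω u pstar := by
  haveI : Nonempty (Fin K) := Fin.pos_iff_nonempty.mp hK
  obtain ⟨⟨hc0, hpmem, hNp, hfixp⟩, hmax⟩ := hsol
  have hup : ∀ k, u k pstar = cstar * ω k := by
    intro k
    have hfpos : 0 < f k pstar := (hA k).1.1 pstar hpmem
    have hpk : pstar k = cstar * (ω k * f k pstar) := by
      have h := congrFun hfixp k
      rwa [Pi.smul_apply, smul_eq_mul, hT] at h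
    rw [(hA k).2.2 pstar hpmem, hpk]
    field_simp
  have hbound : ∀ c' p', Feas2 N pbar ω u c' p' → c' ≤ cstar := by
    intro c' p' ⟨hc', hp'mem, hNp', hu'⟩
    rcases eq_or_lt_of_le hc' with h0 | h0
    · exact h0 ▸ hc0
    · have hge : ∀ k, c' * (ω k * f k p') ≤ p' k := by
        intro k
        have hfpos : 0 < f k p' := (hA k).1.1 p' hp'mem
        have h := hu' k
        rw [(hA k).2.2 p' hp'mem] at h
        calc c' * (ω k * f k p') = c' * ω k * f k p' := by ring
          _ ≤ p' k := (le_div_iff₀ hfpos).1 h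
      obtain ⟨q, hq⟩ := aux_fixed N hN pbar ω hω f (fun k => (hA k).1)
        (fun k => (hA k).2.1) T hT c' h0 p' hp'mem hNp' hge
      exact hmax c' q hq
  have hSol2 : Sol2 N pbar ω u cstar pstar :=
    ⟨⟨hc0, hpmem, hNp, fun k => (hup k).ge⟩, hbound⟩
  refine ⟨hSol2, ⟨hpmem, hNp⟩, fun r hr => ?_⟩
  have hinfp : (⨅ k, (ω k)⁻¹ * u k pstar) = cstar := by
    have hconst : ∀ k, (ω k)⁻¹ * u k pstar = cstar := by
      intro k
      rw [hup k, mul_comm cstar, ← mul_assoc, inv_mul_cancel₀ (hω k).ne', one_mul]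
    simp only [hconst, ciInf_const]
  rw [hinfp]
  set m := ⨅ k, (ω k)⁻¹ * u k r with hm
  by_cases hm0 : m ≤ 0
  · exact hm0.trans hc0
  · push_neg at hm0
    refine hbound m r ⟨hm0.le, hr.1, hr.2, fun k => ?_⟩
    have hle : m ≤ (ω k)⁻¹ * u k r := ciInf_le (Finite.bddBelow_range _) k
    have := mul_le_mul_of_nonneg_right hle (hω k).le
    calc m * ω k ≤ (ω k)⁻¹ * u k r * ω k := this
      _ = u k r := by
          rw [mul_comm (ω k)⁻¹, mul_assoc, inv_mul_cancel₀ (hω k).ne', mul_one]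
end

section
/- Let ‖·‖ be a monotone norm on ℝ^K, p̄ > 0, and let utility functions u_1,…,u_K satisfy Assumption 1 with associated standard interference functions f_1,…,f_K. Let p* ∈ ℝ_{>0}^K satisfy ‖p*‖ = p̄. Then p* is an optimal solution of the weighted max-min problem: maximize min_k ω_k^{−1} u_k(p) over p ∈ ℝ_{≥0}^K subject to ‖p‖ ≤ p̄, where the weights are ω_k = p*_k / f_k(p*) = u_k(p*) > 0 for every k. Furthermore, with T(p) := (ω_1 f_1(p),…,ω_K f_K(p)) for these weights, the pair (c* := p̄/‖T(p*)‖, p*) is a common optimal solution of Problem (2) (maximize c subject to ‖p‖ ≤ p̄ and u_k(p) ≥ c·ω_k for all k) and of Problem (4) (maximize c subject to ‖p‖ ≤ p̄ and p = c·T(p)). -/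
open Filter Topology MeasureTheory

/-- Key lemma: no feasible point can strictly dominate `p*` in all utilities. -/
lemma key_lemma {K : ℕ} (N : (Fin K → ℝ) → ℝ) (hN : IsMonoNorm N)
    (pbar : ℝ) (hpbar : 0 < pbar) (f : Fin K → (Fin K → ℝ) → ℝ)
    (hf : ∀ k, StdIF (f k)) (pstar : Fin K → ℝ) (hpos : ∀ i, 0 < pstar i)
    (hnorm : N pstar = pbar) (q : Fin K → ℝ) (hq : q ∈ NonnegOrth K)
    (hNq : N q ≤ pbar) (hK : Nonempty (Fin K))
    (hgt : ∀ k, pstar k / f k pstar < q k / f k q) : False := by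
  have hps : pstar ∈ NonnegOrth K := fun i => (hpos i).le
  have hfps : ∀ k, 0 < f k pstar := fun k => (hf k).1 pstar hps
  have hfq : ∀ k, 0 < f k q := fun k => (hf k).1 q hq
  have hqpos : ∀ k, 0 < q k := by
    intro k
    have h1 : 0 < q k / f k q :=
      lt_trans (div_pos (hpos k) (hfps k)) (hgt k)
    by_contra h
    push_neg at h
    have : q k / f k q ≤ 0 := div_nonpos_of_nonpos_of_nonneg h (hfq k).le
    linarith
  -- Step 1: some coordinate of q is ≤ pstar
  have step1 : ∃ k, q k ≤ pstar k := by
    by_contra h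
    push_neg at h
    obtain ⟨k1, _, hk1⟩ := Finset.exists_min_image Finset.univ
      (fun k => q k / pstar k) ⟨Classical.choice hK, Finset.mem_univ _⟩
    set lam := q k1 / pstar k1 with hlam
    have hlam1 : 1 < lam := (one_lt_div (hpos k1)).mpr (h k1)
    have hle : ∀ i, lam * pstar i ≤ q i := by
      intro i
      have := hk1 i (Finset.mem_univ i)
      calc lam * pstar i ≤ (q i / pstar i) * pstar i := by
            apply mul_le_mul_of_nonneg_right this (hpos i).le
        _ = q i := div_mul_cancel₀ _ (hpos i).ne'
    have horth : (lam • pstar) ∈ NonnegOrth K := by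
      intro i
      exact mul_nonneg (by linarith) (hpos i).le
    have hmono := hN.2.2.2.2 (lam • pstar) q horth (fun i => hle i)
    have hsmul : N (lam • pstar) = |lam| * N pstar := hN.2.2.1 lam pstar
    rw [hsmul, abs_of_pos (by linarith : (0:ℝ) < lam), hnorm] at hmono
    nlinarith
  -- Step 2: argmax of pstar k / q k
  obtain ⟨k0, _, hk0⟩ := Finset.exists_max_image Finset.univ
    (fun k => pstar k / q k) ⟨Classical.choice hK, Finset.mem_univ _⟩
  set α := pstar k0 / q k0 with hα
  have hα1 : 1 ≤ α := by
    obtain ⟨k, hk⟩ := step1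
    have h1 : 1 ≤ pstar k / q k := (one_le_div (hqpos k)).mpr hk
    exact le_trans h1 (hk0 k (Finset.mem_univ k))
  have hαpos : 0 < α := lt_of_lt_of_le one_pos hα1
  have hpsle : ∀ i, pstar i ≤ α * q i := by
    intro i
    have := hk0 i (Finset.mem_univ i)
    calc pstar i = (pstar i / q i) * q i := (div_mul_cancel₀ _ (hqpos i).ne').symm
      _ ≤ α * q i := mul_le_mul_of_nonneg_right this (hqpos i).le
  have hpsk0 : pstar k0 = α * q k0 := (div_mul_cancel₀ _ (hqpos k0).ne').symm
  have horth : (α • q) ∈ NonnegOrth K := fun i => mul_nonneg hαpos.le (hq i)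
  have hmono : f k0 pstar ≤ f k0 (α • q) :=
    (hf k0).2.1 (α • q) horth pstar hps (fun i => hpsle i)
  have hscal : f k0 (α • q) ≤ α * f k0 q := by
    rcases eq_or_lt_of_le hα1 with h | h
    · rw [← h, one_smul, one_mul]
    · exact ((hf k0).2.2 q hq α h).le
  have hfle : f k0 pstar ≤ α * f k0 q := le_trans hmono hscal
  have h1 : q k0 / f k0 q = α * q k0 / (α * f k0 q) :=
    (mul_div_mul_left _ _ hαpos.ne').symm
  have h2 : α * q k0 / (α * f k0 q) ≤ α * q k0 / f k0 pstar := by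
    apply div_le_div_of_nonneg_left (mul_nonneg hαpos.le (hqpos k0).le) (hfps k0) hfle
  have h3 := hgt k0
  rw [hpsk0] at h3
  linarith
/-- Proposition 3: any strictly positive `p*` with `‖p*‖ = pbar` solves the weighted
max-min problem with the (positive) weights `ω k = u k p* = p* k / f k p*`; moreover,
`(pbar / ‖T p*‖, p*)` is a common solution of problems (2) and (4). -/
theorem stmt9 {K : ℕ} (N : (Fin K → ℝ) → ℝ) (hN : IsMonoNorm N)
    (pbar : ℝ) (hpbar : 0 < pbar)
    (u f : Fin K → (Fin K → ℝ) → ℝ) (hA : Assumption1 u f)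
    (pstar : Fin K → ℝ) (hpos : ∀ i, 0 < pstar i) (hnorm : N pstar = pbar)
    (ω : Fin K → ℝ) (hω : ∀ k, ω k = u k pstar)
    (T : (Fin K → ℝ) → Fin K → ℝ) (hT : ∀ p k, T p k = ω k * f k p) :
    (∀ k, 0 < ω k) ∧ (∀ k, ω k = pstar k / f k pstar) ∧
    Sol1 N pbar ω u pstar ∧
    Sol2 N pbar ω u (pbar / N (T pstar)) pstar ∧
    Sol4 N pbar T (pbar / N (T pstar)) pstar := by
  have hps : pstar ∈ NonnegOrth K := fun i => (hpos i).le
  have hf : ∀ k, StdIF (f k) := fun k => (hA k).1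
  have hfps : ∀ k, 0 < f k pstar := fun k => (hf k).1 pstar hps
  have hωf : ∀ k, ω k = pstar k / f k pstar := by
    intro k; rw [hω k, (hA k).2.2 pstar hps]
  have hωpos : ∀ k, 0 < ω k := by
    intro k; rw [hωf k]; exact div_pos (hpos k) (hfps k)
  have hK : Nonempty (Fin K) := by
    by_contra h
    have hp0 : pstar = 0 := funext fun i => absurd ⟨i⟩ h
    have : N pstar = 0 := (hN.2.1 pstar).mpr hp0
    linarith [hnorm ▸ this]
  -- no feasible q strictly dominates pstar
  have key : ∀ q ∈ NonnegOrth K, N q ≤ pbar → ¬ ∀ k, ω k < u k q := by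
    intro q hq hNq hcon
    apply key_lemma N hN pbar hpbar f hf pstar hpos hnorm q hq hNq hK
    intro k
    have := hcon k
    rw [hωf k, (hA k).2.2 q hq] at this
    exact this
  have hTp : T pstar = pstar := by
    funext k
    rw [hT, hωf k, div_mul_cancel₀ _ (hfps k).ne']
  have hc : pbar / N (T pstar) = 1 := by
    rw [hTp, hnorm]; exact div_self hpbar.ne'
  refine ⟨hωpos, hωf, ?_, ?_, ?_⟩
  · -- Sol1
    refine ⟨⟨hps, hnorm.le⟩, ?_⟩
    rintro q ⟨hq, hNq⟩
    have hRHS : (⨅ k, (ω k)⁻¹ * u k pstar) = 1 := by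
      have h1 : ∀ k, (ω k)⁻¹ * u k pstar = 1 := fun k => by
        rw [← hω k]; exact inv_mul_cancel₀ (hωpos k).ne'
      simp only [h1]; exact ciInf_const
    rw [hRHS]
    by_contra hcon
    push_neg at hcon
    apply key q hq hNq
    intro k
    have hle : (⨅ k, (ω k)⁻¹ * u k q) ≤ (ω k)⁻¹ * u k q :=
      ciInf_le (Set.Finite.bddBelow (Set.finite_range _)) k
    have h1 : 1 < (ω k)⁻¹ * u k q := lt_of_lt_of_le hcon hle
    calc ω k = ω k * 1 := (mul_one _).symm
      _ < ω k * ((ω k)⁻¹ * u k q) := by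
          exact mul_lt_mul_of_pos_left h1 (hωpos k)
      _ = u k q := by rw [← mul_assoc, mul_inv_cancel₀ (hωpos k).ne', one_mul]
  · -- Sol2
    rw [hc]
    constructor
    · exact ⟨zero_le_one, hps, hnorm.le, fun k => by rw [one_mul, hω k]⟩
    · rintro c' p' ⟨hc'0, hp', hNp', hub⟩
      by_contra hcon
      push_neg at hcon
      apply key p' hp' hNp'
      intro k
      calc ω k = 1 * ω k := (one_mul _).symm
        _ < c' * ω k := mul_lt_mul_of_pos_right hcon (hωpos k)
        _ ≤ u k p' := hub k
  · -- Sol4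
    rw [hc]
    constructor
    · exact ⟨zero_le_one, hps, hnorm.le, by rw [one_smul, hTp]⟩
    · rintro c' p' ⟨hc'0, hp', hNp', hfix⟩
      by_contra hcon
      push_neg at hcon
      apply key p' hp' hNp'
      intro k
      have hfp' : 0 < f k p' := (hf k).1 p' hp'
      have hp'k : p' k = c' * (ω k * f k p') := by
        conv_lhs => rw [hfix]
        simp [hT]
      have hu : u k p' = c' * ω k := by
        rw [(hA k).2.2 p' hp', hp'k]
        field_simp
      rw [hu]
      calc ω k = 1 * ω k := (one_mul _).symm
        _ < c' * ω k := mul_lt_mul_of_pos_right hcon (hωpos k)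
end

section
/- Let ‖·‖ be an arbitrary monotone norm on ℝ^K, let p̄ > 0, let C := {p ∈ ℝ_{≥0}^K : ‖p‖ ≤ p̄}, and let utility functions u_1,…,u_K satisfy Assumption 1. Then for any p* ∈ C, the utilities (u_1(p*),…,u_K(p*)) are on the weak Pareto boundary under the constraint C if and only if ‖p*‖ = p̄. -/
/-!
If `‖p*‖ < p̄`, scale `p*` by some `α > 1` and add a small multiple `ε • 1` (needed where `p*`
vanishes): the result stays in `C`, and by scalability and continuity of the `f k` the
interference grows by a factor below `α`, so every utility strictly increases.

Conversely, suppose `p' ∈ C` strictly improves every utility and let `μ = max_k p*_k / p'_k`,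
attained at `j`. If `μ ≥ 1`, monotonicity and scalability give
`f j p* ≤ f j (μ • p') ≤ μ * f j p'`, so `u j p* ≥ u j p'`. Hence `μ < 1` and
`‖p*‖ ≤ μ * ‖p'‖ < p̄`.
-/

open Filter Topology MeasureTheory

namespace IsMonoNorm

variable {K : ℕ} {N : (Fin K → ℝ) → ℝ}

lemma map_smul_of_nonneg (hN : IsMonoNorm N) {a : ℝ} (ha : 0 ≤ a) (x : Fin K → ℝ) :
    N (a • x) = a * N x := by
  rw [hN.2.2.1, abs_of_nonneg ha]

lemma le_add_smul (hN : IsMonoNorm N) (x v : Fin K → ℝ) {ε : ℝ} (hε : 0 ≤ ε) :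
    N (x + ε • v) ≤ N x + ε * N v :=
  (hN.2.2.2.1 x _).trans_eq (by rw [hN.map_smul_of_nonneg hε])

end IsMonoNorm

namespace StdIF

variable {K : ℕ} {f : (Fin K → ℝ) → ℝ}

lemma le_mul_of_le_smul (hf : StdIF f) {x y : Fin K → ℝ} (hx : 0 ≤ x) (hy : 0 ≤ y)
    {μ : ℝ} (hμ : 1 ≤ μ) (hyx : y ≤ μ • x) : f y ≤ μ * f x := by
  have hmono : f y ≤ f (μ • x) :=
    hf.2.1 _ (smul_nonneg (by linarith) hx) _ hy hyx
  rcases hμ.eq_or_lt with rfl | hμ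
  · simpa using hmono
  · exact hmono.trans (hf.2.2 x hx μ hμ).le

lemma eventually_lt_mul (hf : StdIF f) (hc : ContinuousOn f (NonnegOrth K))
    {p v : Fin K → ℝ} (hp : 0 ≤ p) (hv : 0 ≤ v) {α : ℝ} (hα : 1 < α) :
    ∀ᶠ ε in 𝓝[≥] (0 : ℝ), f (α • p + ε • v) < α * f p := by
  have hαp : 0 ≤ α • p := smul_nonneg (by linarith) hp
  have hline : ContinuousWithinAt (fun ε : ℝ => f (α • p + ε • v)) (Set.Ici 0) 0 := by
    have hcont : Continuous fun ε : ℝ => α • p + ε • v := by fun_prop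
    refine (hc.continuousWithinAt ?_).comp hcont.continuousWithinAt
      fun ε (hε : 0 ≤ ε) => add_nonneg hαp (smul_nonneg hε hv)
    rw [zero_smul, add_zero]
    exact hαp
  exact hline.eventually_lt_const (by simpa using hf.2.2 p hp α hα)

end StdIF

variable {K : ℕ} {f : Fin K → (Fin K → ℝ) → ℝ}

lemma exists_lt_one_le_smul_of_forall_div_lt (hf : ∀ k, StdIF (f k)) {p p' : Fin K → ℝ}
    (hp : 0 ≤ p) (hp' : 0 ≤ p') (hlt : ∀ k, p k / f k p < p' k / f k p') :
    ∃ μ : ℝ, 0 ≤ μ ∧ μ < 1 ∧ p ≤ μ • p' := by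
  have hp'_pos : ∀ k, 0 < p' k := fun k =>
    pos_of_mul_pos_left ((div_nonneg (hp k) ((hf k).1 p hp).le).trans_lt (hlt k))
      (inv_pos.2 ((hf k).1 p' hp')).le
  rcases isEmpty_or_nonempty (Fin K) with hK | hK
  · exact ⟨0, le_rfl, one_pos, fun k => isEmptyElim k⟩
  obtain ⟨j, hj⟩ := Finite.exists_max fun k => p k / p' k
  set μ := p j / p' j
  have hle : p ≤ μ • p' := fun k => (div_le_iff₀ (hp'_pos k)).1 (hj k)
  refine ⟨μ, div_nonneg (hp j) (hp'_pos j).le, lt_of_not_ge fun hμ => (hlt j).not_ge ?_, hle⟩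
  have hfj : f j p ≤ μ * f j p' := (hf j).le_mul_of_le_smul hp' hp hμ hle
  have hpj : p j = μ * p' j := (div_mul_cancel₀ _ (hp'_pos j).ne').symm
  rw [hpj, div_le_div_iff₀ ((hf j).1 p' hp') ((hf j).1 p hp)]
  nlinarith [hp'_pos j]

lemma exists_forall_div_lt_of_norm_lt {N : (Fin K → ℝ) → ℝ} (hN : IsMonoNorm N)
    (hf : ∀ k, StdIF (f k)) (hc : ∀ k, ContinuousOn (f k) (NonnegOrth K))
    {p : Fin K → ℝ} (hp : 0 ≤ p) {pbar : ℝ} (hNp : N p < pbar) :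
    ∃ p', 0 ≤ p' ∧ N p' < pbar ∧ ∀ k, p k / f k p < p' k / f k p' := by
  obtain ⟨α, hαN, hα⟩ : ∃ α, α * N p < pbar ∧ 1 < α := by
    have : ∀ᶠ α in 𝓝 (1 : ℝ), α * N p < pbar :=
      (continuous_id.mul continuous_const).continuousAt.eventually_lt_const (by simpa using hNp)
    exact ((this.filter_mono nhdsWithin_le_nhds).and eventually_mem_nhdsWithin).exists
      (f := 𝓝[>] 1)
  have hnorm : ∀ᶠ ε in 𝓝 (0 : ℝ), α * N p + ε * N 1 < pbar :=
    (continuous_const.add (continuous_id.mul continuous_const)).continuousAt.eventually_lt_const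
      (by simpa using hαN)
  have hinterf : ∀ᶠ ε in 𝓝[>] (0 : ℝ), ∀ k, f k (α • p + ε • 1) < α * f k p :=
    eventually_all.2 fun k => ((hf k).eventually_lt_mul (hc k) hp zero_le_one hα).filter_mono
      (nhdsWithin_mono _ Set.Ioi_subset_Ici_self)
  obtain ⟨ε, hε, hεN, hεf⟩ :=
    (eventually_mem_nhdsWithin.and ((hnorm.filter_mono nhdsWithin_le_nhds).and hinterf)).exists
  have hq : 0 ≤ α • p + ε • (1 : Fin K → ℝ) :=
    add_nonneg (smul_nonneg (by linarith) hp) (smul_nonneg hε.le zero_le_one)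
  refine ⟨α • p + ε • 1, hq, ?_, fun k => ?_⟩
  · calc N (α • p + ε • 1) ≤ N (α • p) + ε * N 1 := hN.le_add_smul _ _ hε.le
      _ = α * N p + ε * N 1 := by rw [hN.map_smul_of_nonneg (by linarith)]
      _ < pbar := hεN
  · have hfp := (hf k).1 p hp
    have hfq := (hf k).1 _ hq
    have hpk : 0 ≤ p k := hp k
    have hε : 0 < ε := hε
    simp only [Pi.add_apply, Pi.smul_apply, Pi.one_apply, smul_eq_mul, mul_one]
    rw [div_lt_div_iff₀ hfp hfq]
    nlinarith [mul_le_mul_of_nonneg_left (hεf k).le hpk]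

/-- Proposition 4: for `p* ∈ C = {p ≥ 0 : ‖p‖ ≤ pbar}`, the utilities of `p*` are on
the weak Pareto boundary under the constraint `C` if and only if `‖p*‖ = pbar`. -/
theorem stmt10 {K : ℕ} (N : (Fin K → ℝ) → ℝ) (hN : IsMonoNorm N)
    (pbar : ℝ) (hpbar : 0 < pbar)
    (u f : Fin K → (Fin K → ℝ) → ℝ) (hA : Assumption1 u f)
    (pstar : Fin K → ℝ) (hpstar : pstar ∈ NonnegOrth K) (hfeas : N pstar ≤ pbar) :
    WeakPareto u {p | p ∈ NonnegOrth K ∧ N p ≤ pbar} pstar ↔ N pstar = pbar := by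
  have hf k := (hA k).1
  have hu k : ∀ p ∈ NonnegOrth K, u k p = p k / f k p := (hA k).2.2
  constructor
  · intro hWP
    by_contra hne
    obtain ⟨p', hp', hNp', hlt⟩ := exists_forall_div_lt_of_norm_lt hN hf (fun k => (hA k).2.1)
      hpstar (hfeas.lt_of_ne hne)
    exact hWP ⟨p', ⟨hp', hNp'.le⟩, fun k => by rw [hu k _ hpstar, hu k _ hp']; exact hlt k⟩
  · rintro hNp ⟨p', ⟨hp', hNp'⟩, hlt⟩
    obtain ⟨μ, hμ0, hμ1, hle⟩ := exists_lt_one_le_smul_of_forall_div_lt hf hpstar hp'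
      fun k => by simpa only [hu k _ hpstar, hu k _ hp'] using hlt k
    have : N pstar < pbar := calc
      N pstar ≤ N (μ • p') := hN.2.2.2.2 _ _ hpstar hle
      _ = μ * N p' := hN.map_smul_of_nonneg hμ0 p'
      _ ≤ μ * pbar := mul_le_mul_of_nonneg_left hNp' hμ0
      _ < pbar := mul_lt_of_lt_one_left hpbar hμ1
    exact this.ne hNp
end

section
/- Every positive concave function is a standard interference function: if f : ℝ_{≥0}^K → ℝ_{>0} is concave on ℝ_{≥0}^K (i.e., f(λx + (1−λ)y) ≥ λf(x) + (1−λ)f(y) for all x, y ∈ ℝ_{≥0}^K and λ ∈ [0,1]) and takes only strictly positive values, then f is monotone (x ≥ y coordinatewise implies f(x) ≥ f(y)) and scalable (for all x ∈ ℝ_{≥0}^K and α > 1, α·f(x) > f(α·x)). -/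
open Filter Topology MeasureTheory

/-!
A concave function restricted to a ray `t ↦ y + t • v` is concave on `[0, ∞)`, so if it ever
decreased it would tend to `-∞`; positivity rules this out. For scalability, `x` is the convex
combination `α⁻¹ • (α • x) + (1 - α⁻¹) • 0`, and concavity together with `f 0 > 0` gives
`α⁻¹ * f (α • x) < f x`.
-/

section Concave

variable {E : Type*} [AddCommGroup E] [Module ℝ E] {s : Set E} {f : E → ℝ}

theorem ConcaveOn.map_le_map_add_of_bddBelow (hf : ConcaveOn ℝ s f) (hb : BddBelow (f '' s))
    {y v : E} (hray : ∀ t : ℝ, 0 ≤ t → y + t • v ∈ s) : f y ≤ f (y + v) := by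
  obtain ⟨b, hb⟩ := hb
  have hy : y ∈ s := by simpa using hray 0 le_rfl
  have hlim : Tendsto (fun c : ℝ => c * b + (1 - c) * f y) (𝓝[>] 0) (𝓝 (f y)) := by
    have : Continuous fun c : ℝ => c * b + (1 - c) * f y := by fun_prop
    simpa using (this.tendsto 0).mono_left nhdsWithin_le_nhds
  refine le_of_tendsto hlim ?_
  filter_upwards [Ioc_mem_nhdsGT (zero_lt_one' ℝ)] with c ⟨hc0, hc1⟩
  have hcomb : c • (y + c⁻¹ • v) + (1 - c) • y = y + v := by
    rw [smul_add, smul_smul, mul_inv_cancel₀ hc0.ne', one_smul]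
    module
  have hconc := hf.2 (hray c⁻¹ (inv_nonneg.2 hc0.le)) hy hc0.le (sub_nonneg.2 hc1) (by ring)
  rw [hcomb, smul_eq_mul, smul_eq_mul] at hconc
  have hbound : b ≤ f (y + c⁻¹ • v) := hb ⟨_, hray c⁻¹ (inv_nonneg.2 hc0.le), rfl⟩
  nlinarith

theorem ConcaveOn.map_smul_lt_mul (hf : ConcaveOn ℝ s f) (h0 : (0 : E) ∈ s) (hf0 : 0 < f 0)
    {x : E} {α : ℝ} (hα : 1 < α) (hαx : α • x ∈ s) : f (α • x) < α * f x := by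
  have hα0 : 0 < α := by linarith
  have hcomb : α⁻¹ • (α • x) + (1 - α⁻¹) • (0 : E) = x := by
    rw [smul_smul, inv_mul_cancel₀ hα0.ne', one_smul, smul_zero, add_zero]
  have hconc := hf.2 hαx h0 (inv_nonneg.2 hα0.le) (sub_nonneg.2 (inv_le_one_of_one_le₀ hα.le))
    (by ring)
  rw [hcomb, smul_eq_mul, smul_eq_mul] at hconc
  have hf0' : 0 < (1 - α⁻¹) * f 0 := mul_pos (sub_pos.2 (inv_lt_one_of_one_lt₀ hα)) hf0
  calc f (α • x) = α * (α⁻¹ * f (α • x)) := by field_simp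
    _ < α * f x := by gcongr; linarith

end Concave

/-- Every positive concave function on the nonnegative orthant is a standard
interference function: it is monotone and scalable. -/
theorem stmt13 {K : ℕ} (f : (Fin K → ℝ) → ℝ)
    (hconc : ConcaveOn ℝ (NonnegOrth K) f)
    (hpos : ∀ x ∈ NonnegOrth K, 0 < f x) :
    (∀ x ∈ NonnegOrth K, ∀ y ∈ NonnegOrth K, (∀ i, y i ≤ x i) → f y ≤ f x) ∧
    (∀ x ∈ NonnegOrth K, ∀ α : ℝ, 1 < α → f (α • x) < α * f x) := by
  have h0 : (0 : Fin K → ℝ) ∈ NonnegOrth K := fun _ => le_rfl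
  refine ⟨fun x _ y hy hyx => ?_, fun x hx α hα => ?_⟩
  · have hbdd : BddBelow (f '' NonnegOrth K) := ⟨0, by
      rintro _ ⟨z, hz, rfl⟩
      exact (hpos z hz).le⟩
    have hray : ∀ t : ℝ, 0 ≤ t → y + t • (x - y) ∈ NonnegOrth K := fun t ht i => by
      simpa using add_nonneg (hy i) (mul_nonneg ht (sub_nonneg.2 (hyx i)))
    simpa using hconc.map_le_map_add_of_bddBelow hbdd hray
  · exact hconc.map_smul_lt_mul h0 (hpos 0 h0) hα fun i => mul_nonneg (by linarith) (hx i)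
end

section
/- Let I : ℝ_{≥0}^K → ℝ_{>0}^K be a standard interference mapping. Then I has at most one fixed point; moreover, if there exists p ∈ ℝ_{≥0}^K with I(p) ≤ p coordinatewise, then I has a (unique) fixed point p' ∈ ℝ_{>0}^K, and this fixed point satisfies p' ≤ p coordinatewise. -/
open Filter Topology MeasureTheory

lemma fix_le {K : ℕ} (I : (Fin K → ℝ) → (Fin K → ℝ))
    (hI : ∀ k, StdIF fun p => I p k)
    (p : Fin K → ℝ) (hp : p ∈ NonnegOrth K) (hfp : I p = p)
    (q : Fin K → ℝ) (hq : q ∈ NonnegOrth K) (hfq : I q = q) :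
    ∀ i, p i ≤ q i := by
  have hpq : ∀ k, 0 < q k := by
    intro k
    simpa [hfq] using (hI k).1 q hq
  by_contra h
  push_neg at h
  obtain ⟨j, hj⟩ := h
  obtain ⟨j0, -, hj0⟩ := Finset.exists_max_image Finset.univ (fun k => p k / q k)
    ⟨j, Finset.mem_univ j⟩
  set α := p j0 / q j0 with hαdef
  have hα : 1 < α := lt_of_lt_of_le ((one_lt_div (hpq j)).2 hj)
    (hj0 j (Finset.mem_univ j))
  have hle : ∀ k, p k ≤ (α • q) k := by
    intro k
    have h1 : p k / q k ≤ α := hj0 k (Finset.mem_univ k)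
    have := (div_le_iff₀ (hpq k)).1 h1
    simpa [Pi.smul_apply, smul_eq_mul, mul_comm] using this
  have hαq : (α • q) ∈ NonnegOrth K := by
    intro i
    exact mul_nonneg (le_of_lt (lt_trans one_pos hα)) (hq i)
  have mono : I p j0 ≤ I (α • q) j0 := (hI j0).2.1 (α • q) hαq p hp hle
  have scal : I (α • q) j0 < α * I q j0 := (hI j0).2.2 q hq α hα
  have heq : α * q j0 = p j0 := by
    rw [hαdef]
    exact div_mul_cancel₀ _ (hpq j0).ne'
  have : p j0 < p j0 := by
    calc p j0 = I p j0 := by rw [hfp]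
    _ ≤ I (α • q) j0 := mono
    _ < α * I q j0 := scal
    _ = α * q j0 := by rw [hfq]
    _ = p j0 := heq
  exact lt_irrefl _ this

/-- [Fact 4, renato2016]: a standard interference mapping has at most one fixed point
in the nonnegative orthant; and if `I p ≤ p` for some `p ≥ 0`, then `I` has a
(unique) strictly positive fixed point `p'`, which satisfies `p' ≤ p`. -/
theorem stmt15 {K : ℕ} (I : (Fin K → ℝ) → (Fin K → ℝ))
    (hI : ∀ k, StdIF fun p => I p k) :
    (∀ p ∈ NonnegOrth K, ∀ q ∈ NonnegOrth K, I p = p → I q = q → p = q) ∧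
    (∀ p ∈ NonnegOrth K, (∀ i, I p i ≤ p i) →
      ∃ p' : Fin K → ℝ, (∀ i, 0 < p' i) ∧ I p' = p' ∧ ∀ i, p' i ≤ p i) := by
  constructor
  · intro p hp q hq hfp hfq
    funext i
    exact le_antisymm (fix_le I hI p hp hfp q hq hfq i)
      (fix_le I hI q hq hfq p hp hfp i)
  · intro p hp hIp
    set S : Set (Fin K → ℝ) :=
      {x | (∀ i, 0 ≤ x i) ∧ (∀ i, x i ≤ p i) ∧ ∀ i, I x i ≤ x i} with hS
    have hpS : p ∈ S := ⟨hp, fun i => le_rfl, hIp⟩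
    set p' : Fin K → ℝ := fun i => sInf ((fun x => x i) '' S) with hp'def
    have hne : ∀ i, ((fun x => x i) '' S).Nonempty := fun i => ⟨p i, p, hpS, rfl⟩
    have hbdd : ∀ i, BddBelow ((fun x => x i) '' S) := by
      intro i
      refine ⟨0, ?_⟩
      rintro y ⟨x, hx, rfl⟩
      exact hx.1 i
    have hp'le : ∀ x ∈ S, ∀ i, p' i ≤ x i := by
      intro x hx i
      exact csInf_le (hbdd i) ⟨x, hx, rfl⟩
    have hp'nonneg : ∀ i, 0 ≤ p' i := by
      intro i
      apply le_csInf (hne i)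
      rintro y ⟨x, hx, rfl⟩
      exact hx.1 i
    have hp'orth : p' ∈ NonnegOrth K := hp'nonneg
    have hp'lep : ∀ i, p' i ≤ p i := hp'le p hpS
    have hIp' : ∀ i, I p' i ≤ p' i := by
      intro i
      apply le_csInf (hne i)
      rintro y ⟨x, hx, rfl⟩
      calc I p' i ≤ I x i := (hI i).2.1 x hx.1 p' hp'orth (hp'le x hx)
      _ ≤ x i := hx.2.2 i
    have hIp'S : I p' ∈ S := by
      refine ⟨fun i => le_of_lt ((hI i).1 p' hp'orth), ?_, ?_⟩
      · intro i
        exact le_trans (hIp' i) (hp'lep i)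
      · intro i
        exact (hI i).2.1 p' hp'orth (I p') (fun j => le_of_lt ((hI j).1 p' hp'orth))
          hIp'
    have hfix : I p' = p' := by
      funext i
      exact le_antisymm (hIp' i) (hp'le (I p') hIp'S i)
    refine ⟨p', ?_, hfix, hp'lep⟩
    intro i
    simpa [hfix] using (hI i).1 p' hp'orth
end
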